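/- Let a ≥ 2 be a positive integer, let c > 1 be an integer, and suppose d is a positive rational such that d·a is a positive integer with d·a > 1. Then the infinite regular continued fraction [c − 1; 1, d·a − 1, c·a − 1, 1, d·a² − 1, c·a² − 1, ...] (with integer part c − 1 followed by period blocks 1, d·a^k − 1, c·a^k − 1 for k = 1, 2, 3, ...) equals (Σ_{n=0}^∞ (−1)^n/(c^{n−1} · d^n · a^{n²} · (−1/a; −1/a)_n)) / (Σ_{n=0}^∞ 1/((c·d)^n · a^{n²+n} · (−1/a; −1/a)_n)). -/

import Mathlib

open Filter Topology

/-- Value of the finite continued fraction `[b₀; b₁, …, bₙ]`. -/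
noncomputable def contFracList : List ℝ → ℝ
  | [] => 0
  | [x] => x
  | x :: y :: xs => x + 1 / contFracList (y :: xs)

/-- The `n`-th convergent `[b 0; b 1, …, b n]` of the infinite regular continued
fraction with partial quotients `b`. -/
noncomputable def cfConv (b : ℕ → ℝ) (n : ℕ) : ℝ :=
  contFracList ((List.range (n + 1)).map b)

/-- The infinite regular continued fraction with partial quotients `b` converges to `L`,
i.e. the limit of its convergents is `L`. -/
def CFracEq (b : ℕ → ℝ) (L : ℝ) : Prop :=
  Filter.Tendsto (cfConv b) Filter.atTop (nhds L)

/-- The q-Pochhammer symbol `(c; q)ₙ = ∏_{j=0}^{n-1} (1 - c qʲ)`. -/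
noncomputable def qPoch (c q : ℝ) (n : ℕ) : ℝ :=
  ∏ j ∈ Finset.range n, (1 - c * q ^ j)

set_option linter.unusedSectionVars false

/-- numerator continuant -/
noncomputable def pnum (b : ℕ → ℝ) : ℕ → ℝ
  | 0 => b 0
  | 1 => b 1 * b 0 + 1
  | (n+2) => b (n+2) * pnum b (n+1) + pnum b n

/-- denominator continuant -/
noncomputable def qden (b : ℕ → ℝ) : ℕ → ℝ
  | 0 => 1
  | 1 => b 1
  | (n+2) => b (n+2) * qden b (n+1) + qden b n

section CF
variable {b : ℕ → ℝ} (hb : ∀ i, 1 ≤ b i)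

include hb

lemma pnum_ge_one : ∀ n, 1 ≤ pnum b n := by
  intro n
  induction n using Nat.strong_induction_on with
  | _ n ih =>
    match n with
    | 0 => simpa [pnum] using hb 0
    | 1 =>
      have h0 := hb 0; have h1 := hb 1
      simp only [pnum]; nlinarith
    | (n+2) =>
      have h1 := ih (n+1) (by omega)
      have h2 := ih n (by omega)
      have h3 := hb (n+2)
      simp only [pnum]; nlinarith

lemma qden_ge_one : ∀ n, 1 ≤ qden b n := by
  intro n
  induction n using Nat.strong_induction_on with
  | _ n ih =>
    match n with
    | 0 => simp [qden]
    | 1 => simpa [qden] using hb 1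
    | (n+2) =>
      have h1 := ih (n+1) (by omega)
      have h2 := ih n (by omega)
      have h3 := hb (n+2)
      simp only [qden]; nlinarith

lemma qden_mono : ∀ n, qden b n ≤ qden b (n+1) := by
  intro n
  match n with
  | 0 => simpa [qden] using hb 1
  | (n+1) =>
    have h1 := qden_ge_one hb (n+1)
    have h2 := qden_ge_one hb n
    have h3 := hb (n+2)
    simp only [qden]; nlinarith

lemma qq_growth : ∀ n, (2:ℝ)^n ≤ qden b n * qden b (n+1) := by
  intro n
  induction n with
  | zero => simpa [qden] using hb 1
  | succ n ih =>
    have h1 := qden_ge_one hb (n+1)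
    have h2 := qden_ge_one hb n
    have h3 := hb (n+2)
    have h4 := qden_mono hb n
    calc (2:ℝ)^(n+1) = 2 * 2^n := by ring
    _ ≤ 2 * (qden b n * qden b (n+1)) := by linarith [pow_pos (by norm_num : (0:ℝ) < 2) n]
    _ ≤ qden b (n+1) * qden b (n+2) := by
        simp only [qden]
        have e1 : qden b n * qden b (n+1) ≤ qden b (n+1) * qden b (n+1) :=
          mul_le_mul_of_nonneg_right h4 (by linarith)
        have e2 : qden b (n+1) * qden b (n+1) ≤ b (n+2) * (qden b (n+1) * qden b (n+1)) := by
          nlinarith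
        nlinarith

omit hb in
lemma cf_det : ∀ n, pnum b (n+1) * qden b n - pnum b n * qden b (n+1) = (-1)^n := by
  intro n
  induction n with
  | zero => simp [pnum, qden]; ring
  | succ n ih =>
    have : pnum b (n+2) * qden b (n+1) - pnum b (n+1) * qden b (n+2)
        = -(pnum b (n+1) * qden b n - pnum b n * qden b (n+1)) := by
      simp only [pnum, qden]; ring
    rw [this, ih]; ring

end CF

lemma qden_eq_pnum_shift (b : ℕ → ℝ) : ∀ n, qden b (n+1) = pnum (fun i => b (i+1)) n := by
  intro n
  induction n using Nat.strong_induction_on with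
  | _ n ih =>
    match n with
    | 0 => simp [qden, pnum]
    | 1 => simp [qden, pnum]
    | (n+2) =>
      have h1 := ih (n+1) (by omega)
      have h2 := ih n (by omega)
      simp only [qden, pnum] at *
      rw [h1, h2]

lemma pnum_shift (b : ℕ → ℝ) :
    ∀ n, pnum b (n+1) = b 0 * pnum (fun i => b (i+1)) n + qden (fun i => b (i+1)) n := by
  intro n
  induction n using Nat.strong_induction_on with
  | _ n ih =>
    match n with
    | 0 => simp [pnum, qden]; ring
    | 1 => simp [pnum, qden]; ring
    | (n+2) =>
      have h1 := ih (n+1) (by omega)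
      have h2 := ih n (by omega)
      simp only [pnum, qden] at *
      rw [h1, h2]; ring

lemma cfConv_succ (b : ℕ → ℝ) (n : ℕ) :
    cfConv b (n+1) = b 0 + 1 / cfConv (fun i => b (i+1)) n := by
  unfold cfConv
  rw [List.range_succ_eq_map, List.map_cons, List.map_map]
  have h : (List.range (n+1)).map (b ∘ Nat.succ) = (List.range (n+1)).map (fun i => b (i+1)) := by
    simp [Function.comp_def]
  rw [h]
  rcases hcons : (List.range (n+1)).map (fun i => b (i+1)) with _ | ⟨y, ys⟩
  · exfalso
    have := congrArg List.length hcons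
    simp at this
  · simp [contFracList]

lemma cfConv_eq_pq : ∀ (n : ℕ) (b : ℕ → ℝ), (∀ i, 1 ≤ b i) →
    cfConv b n = pnum b n / qden b n := by
  intro n
  induction n with
  | zero => intro b hb; simp [cfConv, contFracList, pnum, qden, List.range_succ]
  | succ n ih =>
    intro b hb
    have hb' : ∀ i, 1 ≤ (fun i => b (i+1)) i := fun i => hb (i+1)
    rw [cfConv_succ, ih _ hb']
    have hp : (0:ℝ) < pnum (fun i => b (i+1)) n := lt_of_lt_of_le one_pos (pnum_ge_one hb' n)
    have hq : (0:ℝ) < qden (fun i => b (i+1)) n := lt_of_lt_of_le one_pos (qden_ge_one hb' n)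
    rw [one_div_div, pnum_shift, qden_eq_pnum_shift]
    field_simp

noncomputable def piA (A : ℝ) (n : ℕ) : ℝ := qPoch (-(1/A)) (-(1/A)) n

lemma piA_zero (A : ℝ) : piA A 0 = 1 := by simp [piA, qPoch]

lemma piA_succ (A : ℝ) (n : ℕ) : piA A (n+1) = piA A n * (1 - (-(1/A))^(n+1)) := by
  simp only [piA, qPoch, Finset.prod_range_succ]
  rw [← pow_succ']

section Pi
variable {A : ℝ} (hA : 2 ≤ A)
include hA

lemma hA0 : (0:ℝ) < A := by linarith

lemma invA_le : (1/A) ≤ 1/2 := by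
  rw [div_le_div_iff₀ (hA0 hA) (by norm_num)]; linarith

lemma invApow_le (m : ℕ) : (1/A)^m ≤ (1/2)^m :=
  pow_le_pow_left₀ (by positivity) (invA_le hA) m

lemma pi_ge_one : ∀ n, 1 ≤ piA A n := by
  intro n
  induction n using Nat.strong_induction_on with
  | _ n ih =>
    match n with
    | 0 => simp [piA_zero]
    | (m+1) =>
      rcases Nat.even_or_odd (m+1) with he | ho
      · -- m+1 even, so m ≥ 1, pair the last two factors
        obtain ⟨l, rfl⟩ : ∃ l, m = l + 1 := by
          rcases he with ⟨t, ht⟩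
          exact ⟨m - 1, by omega⟩
        have ihl := ih l (by omega)
        rw [piA_succ, piA_succ]
        have hodd : Odd (l+1) := by
          rcases he with ⟨t, ht⟩; exact ⟨t - 1, by omega⟩
        have heven : Even (l+2) := by rcases he with ⟨t, ht⟩; exact ⟨t, by omega⟩
        have e1 : (-(1/A))^(l+1) = -((1/A)^(l+1)) := hodd.neg_pow _
        have e2 : (-(1/A))^(l+2) = (1/A)^(l+2) := heven.neg_pow _
        rw [e1, e2]
        set x : ℝ := (1/A)^(l+1) with hx
        have hx0 : 0 < x := by positivity
        have hx2 : x ≤ 1/2 := by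
          calc x ≤ (1/2)^(l+1) := invApow_le hA _
          _ ≤ (1/2)^1 := pow_le_pow_of_le_one (by norm_num) (by norm_num) (by omega)
          _ = 1/2 := by norm_num
        have e3 : (1/A)^(l+2) = x * (1/A) := by rw [hx, pow_succ]
        rw [e3]
        have hAinv : (1/A) ≤ 1/2 := invA_le hA
        have hAinv0 : (0:ℝ) < 1/A := by positivity
        have h5 : x*(1/A) ≤ (1/2)*(1/2) := mul_le_mul hx2 hAinv hAinv0.le (by norm_num)
        have h6 : (0:ℝ) ≤ 1 - 1/A - x*(1/A) := by linarith
        have key : 1 ≤ (1 - -x) * (1 - x * (1/A)) := by nlinarith [mul_nonneg hx0.le h6]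
        have h4 : (1:ℝ)*1 ≤ piA A l * ((1 - -x) * (1 - x * (1/A))) :=
          mul_le_mul ihl key zero_le_one (by linarith)
        rw [mul_assoc]; linarith
      · -- m+1 odd : last factor ≥ 1
        have ihm := ih m (by omega)
        rw [piA_succ]
        have e1 : (-(1/A))^(m+1) = -((1/A)^(m+1)) := ho.neg_pow _
        rw [e1]
        have hx0 : (0:ℝ) < (1/A)^(m+1) := by positivity
        nlinarith

lemma pi_pos (n : ℕ) : 0 < piA A n := lt_of_lt_of_le one_pos (pi_ge_one hA n)

end Pi

noncomputable def useq (A C D : ℝ) (n : ℕ) : ℝ :=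
  (-1)^n * C / ((C*D)^n * A^(n^2) * piA A n)

noncomputable def vseq (A C D : ℝ) (n : ℕ) : ℝ :=
  1 / ((C*D)^n * A^(n^2+n) * piA A n)

noncomputable def Pser (A C D : ℝ) : ℝ := ∑' n, useq A C D n
noncomputable def Qser (A C D : ℝ) : ℝ := ∑' n, vseq A C D n

section Series
variable {A C D : ℝ} (hA : 2 ≤ A) (hC : 2 ≤ C) (hD : 0 < D) (hDA : 2 ≤ D*A)
include hA hC hD hDA

lemma hCD0 : 0 < C*D := mul_pos (by linarith) hD

lemma hCDA2 : 8 ≤ C*D*A^2 := by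
  have h1 : 4 ≤ C*(D*A) := by nlinarith
  have h2 : C*(D*A)*A ≥ 4*2 := by nlinarith
  nlinarith

lemma hCDA4A : 4*A ≤ C*D*A^2 := by
  have h1 : 4 ≤ C*(D*A) := by nlinarith
  nlinarith

lemma vseq_pos (n : ℕ) : 0 < vseq A C D n := by
  unfold vseq
  have := pi_pos hA (A := A) n
  have := hCD0 hA hC hD hDA
  positivity

lemma vseq_le (n : ℕ) : vseq A C D n ≤ (1/8)^n := by
  unfold vseq
  have hcd := hCD0 hA hC hD hDA
  have hc8 := hCDA2 hA hC hD hDA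
  have hpi := pi_ge_one hA (A := A) n
  have hA0' : (0:ℝ) < A := by linarith
  have h1 : ((C*D*A^2)^n : ℝ) ≤ (C*D)^n * A^(n^2+n) * piA A n := by
    have e : (C*D*A^2)^n = (C*D)^n * A^(2*n) := by rw [mul_pow, ← pow_mul]
    rw [e]
    have h2 : A^(2*n) ≤ A^(n^2+n) := pow_le_pow_right₀ (by linarith) (by nlinarith : 2*n ≤ n^2+n)
    calc (C*D)^n * A^(2*n) ≤ (C*D)^n * A^(n^2+n) :=
          mul_le_mul_of_nonneg_left h2 (by positivity)
    _ ≤ (C*D)^n * A^(n^2+n) * piA A n := le_mul_of_one_le_right (by positivity) hpi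
  have h3 : (0:ℝ) < (C*D*A^2)^n := by positivity
  calc 1 / ((C*D)^n * A^(n^2+n) * piA A n) ≤ 1 / (C*D*A^2)^n :=
        one_div_le_one_div_of_le h3 h1
  _ ≤ (1/8)^n := by
      rw [div_pow, one_pow]
      exact one_div_le_one_div_of_le (by positivity) (pow_le_pow_left₀ (by norm_num) hc8 n)

lemma summable_vseq : Summable (vseq A C D) := by
  apply Summable.of_nonneg_of_le (fun n => le_of_lt (vseq_pos hA hC hD hDA n))
    (vseq_le hA hC hD hDA)
  exact summable_geometric_of_lt_one (by norm_num) (by norm_num)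

lemma useq_abs (n : ℕ) : |useq A C D n| = C / ((C*D)^n * A^(n^2) * piA A n) := by
  unfold useq
  rw [abs_div, abs_mul]
  have hcd := hCD0 hA hC hD hDA
  have hA0' : (0:ℝ) < A := by linarith
  have hpi := pi_pos hA (A := A) n
  rw [abs_pow, abs_neg, abs_one, one_pow, one_mul,
    abs_of_pos (by linarith : (0:ℝ) < C), abs_of_pos (by positivity)]

lemma useq_abs_le_aux (n : ℕ) : |useq A C D n| ≤ C * A / (C*D*A^2)^n := by
  rw [useq_abs hA hC hD hDA]
  have hcd := hCD0 hA hC hD hDA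
  have hc8 := hCDA2 hA hC hD hDA
  have hpi := pi_ge_one hA (A := A) n
  have hA0' : (0:ℝ) < A := by linarith
  have h2 : A^(2*n) ≤ A^(n^2) * A := by
    rw [← pow_succ]
    exact pow_le_pow_right₀ (by linarith) (by nlinarith : 2*n ≤ n^2+1)
  have h1 : ((C*D*A^2)^n : ℝ) ≤ (C*D)^n * A^(n^2) * piA A n * A := by
    have e : (C*D*A^2)^n = (C*D)^n * A^(2*n) := by rw [mul_pow, ← pow_mul]
    rw [e]
    calc (C*D)^n * A^(2*n) ≤ (C*D)^n * (A^(n^2) * A) :=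
          mul_le_mul_of_nonneg_left h2 (by positivity)
    _ ≤ ((C*D)^n * (A^(n^2) * A)) * piA A n := le_mul_of_one_le_right (by positivity) hpi
    _ = (C*D)^n * A^(n^2) * piA A n * A := by ring
  have h3 : (0:ℝ) < (C*D*A^2)^n := by positivity
  rw [div_le_div_iff₀ (by positivity) h3]
  calc C * (C*D*A^2)^n ≤ C * ((C*D)^n * A^(n^2) * piA A n * A) :=
        mul_le_mul_of_nonneg_left h1 (by linarith)
  _ = C * A * ((C*D)^n * A^(n^2) * piA A n) := by ring

lemma useq_abs_le (n : ℕ) : |useq A C D n| ≤ C * A * ((1/8):ℝ)^n := by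
  refine (useq_abs_le_aux hA hC hD hDA n).trans ?_
  have hc8 := hCDA2 hA hC hD hDA
  have h8 : (8:ℝ)^n ≤ (C*D*A^2)^n := pow_le_pow_left₀ (by norm_num) hc8 n
  calc C*A/(C*D*A^2)^n ≤ C*A/(8:ℝ)^n := by
        apply div_le_div_of_nonneg_left (by nlinarith) (by positivity) h8
  _ = C*A*(1/8)^n := by rw [one_div_pow]; ring

lemma useq_abs_le' (n : ℕ) : |useq A C D (n+1)| ≤ (C/4) * ((1/8):ℝ)^n := by
  refine (useq_abs_le_aux hA hC hD hDA (n+1)).trans ?_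
  have hc8 := hCDA2 hA hC hD hDA
  have h4a := hCDA4A hA hC hD hDA
  have hA0' : (0:ℝ) < A := by linarith
  have h8 : (4*A)*(8:ℝ)^n ≤ (C*D*A^2)^(n+1) := by
    rw [pow_succ]
    have e1 : (8:ℝ)^n ≤ (C*D*A^2)^n := pow_le_pow_left₀ (by norm_num) hc8 n
    calc (4*A)*(8:ℝ)^n ≤ (4*A)*(C*D*A^2)^n := by
          apply mul_le_mul_of_nonneg_left e1 (by positivity)
    _ ≤ (C*D*A^2)*(C*D*A^2)^n := by
          apply mul_le_mul_of_nonneg_right h4a (by positivity)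
    _ = (C*D*A^2)^n * (C*D*A^2) := by ring
  calc C*A/(C*D*A^2)^(n+1) ≤ C*A/((4*A)*(8:ℝ)^n) := by
        apply div_le_div_of_nonneg_left (by nlinarith) (by positivity) h8
  _ = (C/4) * (1/8)^n := by
      rw [one_div_pow]; field_simp

lemma summable_useq : Summable (useq A C D) := by
  apply Summable.of_abs
  apply Summable.of_nonneg_of_le (fun n => abs_nonneg _) (useq_abs_le hA hC hD hDA)
  exact (summable_geometric_of_lt_one (by norm_num) (by norm_num)).mul_left _

lemma useq_zero : useq A C D 0 = C := by simp [useq, piA_zero]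

lemma vseq_zero : vseq A C D 0 = 1 := by simp [vseq, piA_zero]

lemma Qser_ge_one : 1 ≤ Qser A C D := by
  have := Summable.le_tsum (summable_vseq hA hC hD hDA) 0
    (fun j _ => le_of_lt (vseq_pos hA hC hD hDA j))
  rw [vseq_zero hA hC hD hDA] at this
  exact this

lemma Qser_pos : 0 < Qser A C D := lt_of_lt_of_le one_pos (Qser_ge_one hA hC hD hDA)

lemma Pser_pos : 0 < Pser A C D := by
  have hsum := summable_useq hA hC hD hDA
  have h0 : Pser A C D = C + ∑' n, useq A C D (n+1) := by
    rw [Pser, Summable.tsum_eq_zero_add hsum, useq_zero hA hC hD hDA]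
  have habs : |∑' n, useq A C D (n+1)| ≤ (C/4) * (8/7) := by
    have hs1 : Summable (fun n => useq A C D (n+1)) := by
      rw [← summable_nat_add_iff 1] at hsum; exact hsum
    calc |∑' n, useq A C D (n+1)| ≤ ∑' n, |useq A C D (n+1)| := by
          have := norm_tsum_le_tsum_norm (f := fun n => useq A C D (n+1))
            (by simpa [Real.norm_eq_abs] using hs1.abs)
          simpa [Real.norm_eq_abs] using this
    _ ≤ ∑' n : ℕ, (C/4) * (1/8)^n := by
        apply Summable.tsum_le_tsum _ hs1.abs
          ((summable_geometric_of_lt_one (by norm_num) (by norm_num)).mul_left _)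
        intro n
        exact useq_abs_le' hA hC hD hDA n
    _ = (C/4) * (8/7) := by
        rw [tsum_mul_left, tsum_geometric_of_lt_one (by norm_num) (by norm_num)]
        norm_num
  have : -((C/4)*(8/7)) ≤ ∑' n, useq A C D (n+1) := neg_le_of_abs_le habs
  rw [h0]; linarith

end Series

section Rel
variable {A C D : ℝ} (hA : 2 ≤ A) (hC : 2 ≤ C) (hD : 0 < D) (hDA : 2 ≤ D*A)
include hA hC hD hDA

lemma xpow_lt_one (n : ℕ) : (1/A)^(n+1) < 1 := by
  have h1 : (1/A)^(n+1) ≤ (1/2:ℝ)^(n+1) := invApow_le hA (n+1)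
  have h2 : (1/2:ℝ)^(n+1) < 1 := pow_lt_one₀ (by norm_num) (by norm_num) (by omega)
  linarith

lemma Apow_ge_two (n : ℕ) : (2:ℝ) ≤ A^(n+1) := by
  calc (2:ℝ) ≤ A := hA
  _ = A^1 := (pow_one A).symm
  _ ≤ A^(n+1) := pow_le_pow_right₀ (by linarith) (by omega)

lemma R1term (n : ℕ) :
    C * vseq A C D (n+1) - useq A C D (n+1) = (C*D*A^2)⁻¹ * useq A (C*A) (D*A) n := by
  have hA0 : (0:ℝ) < A := by linarith
  have hC0 : (0:ℝ) < C := by linarith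
  have hpin : piA A n ≠ 0 := ne_of_gt (pi_pos hA n)
  have hA1 := Apow_ge_two hA hC hD hDA n
  unfold useq vseq
  rw [piA_succ]
  rcases Nat.even_or_odd n with h | h
  · have e1 : (-1:ℝ)^n = 1 := h.neg_one_pow
    have e2 : (-1:ℝ)^(n+1) = -1 := (h.add_one).neg_one_pow
    have e3 : (-(1/A))^(n+1) = -((1/A)^(n+1) : ℝ) := (h.add_one).neg_pow _
    rw [e1, e2, e3, sub_neg_eq_add, div_pow, one_pow]
    have hm : (1:ℝ) + 1/A^(n+1) = (A^(n+1) + 1)/A^(n+1) := by field_simp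
    have hG : A^(n+1) + 1 ≠ 0 := by positivity
    rw [hm]
    field_simp [hG, hpin]
    ring
  · have e1 : (-1:ℝ)^n = -1 := h.neg_one_pow
    have e2 : (-1:ℝ)^(n+1) = 1 := (h.add_one).neg_one_pow
    have e3 : (-(1/A))^(n+1) = ((1/A)^(n+1) : ℝ) := (h.add_one).neg_pow _
    rw [e1, e2, e3, div_pow, one_pow]
    have hm : (1:ℝ) - 1/A^(n+1) = (A^(n+1) - 1)/A^(n+1) := by field_simp
    have hG : A^(n+1) - 1 ≠ 0 := by
      have : (0:ℝ) < A^(n+1) - 1 := by linarith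
      linarith
    rw [hm]
    field_simp [hG, hpin]
    ring

lemma R2term1 :
    vseq A C D 0 + (D*A * useq A C D 1 - (C*D*A) * vseq A C D 1) = 0 := by
  have hA0 : (0:ℝ) < A := by linarith
  have hC0 : (0:ℝ) < C := by linarith
  have h1 : piA A 1 = 1 + 1/A := by
    rw [show (1:ℕ) = 0+1 from rfl, piA_succ, piA_zero]; norm_num
  unfold useq vseq
  simp only [piA_zero, h1]
  have hG : A + 1 ≠ 0 := by positivity
  have hm : (1:ℝ) + 1/A = (A+1)/A := by field_simp
  rw [hm]
  field_simp
  ring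

lemma R2term2 (n : ℕ) :
    vseq A C D (n+1) + (D*A * useq A C D (n+2) - (C*D*A) * vseq A C D (n+2))
      = (C*D*A^2)⁻¹ * vseq A (C*A) (D*A) n := by
  have hA0 : (0:ℝ) < A := by linarith
  have hC0 : (0:ℝ) < C := by linarith
  have hpin : piA A n ≠ 0 := ne_of_gt (pi_pos hA n)
  have hA1 := Apow_ge_two hA hC hD hDA n
  have hA2 := Apow_ge_two hA hC hD hDA (n+1)
  unfold useq vseq
  have hp2 : piA A (n+2) = piA A n * ((1 - (-(1/A))^(n+1)) * (1 - (-(1/A))^(n+2))) := by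
    rw [show n+2 = (n+1)+1 from rfl, piA_succ, piA_succ]; ring
  have hp1 : piA A (n+1) = piA A n * (1 - (-(1/A))^(n+1)) := piA_succ A n
  rw [hp2, hp1]
  rcases Nat.even_or_odd n with h | h
  · have e3 : (-(1/A))^(n+1) = -((1/A)^(n+1) : ℝ) := (h.add_one).neg_pow _
    have e4 : (-(1/A))^(n+2) = ((1/A)^(n+2) : ℝ) := by
      have : Even (n+2) := by rcases h with ⟨t, ht⟩; exact ⟨t+1, by omega⟩
      exact this.neg_pow _
    have e1 : (-1:ℝ)^(n+1) = -1 := (h.add_one).neg_one_pow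
    have e2 : (-1:ℝ)^(n+2) = 1 := by
      have : Even (n+2) := by rcases h with ⟨t, ht⟩; exact ⟨t+1, by omega⟩
      exact this.neg_one_pow
    rw [e2, e3, e4, sub_neg_eq_add, div_pow, div_pow, one_pow, one_pow]
    have hm1 : (1:ℝ) + 1/A^(n+1) = (A^(n+1) + 1)/A^(n+1) := by field_simp
    have hm2 : (1:ℝ) - 1/A^(n+2) = (A^(n+2) - 1)/A^(n+2) := by field_simp
    have hG1 : A^(n+1) + 1 ≠ 0 := by positivity
    have hG2 : A^(n+2) - 1 ≠ 0 := by
      have : (0:ℝ) < A^(n+2) - 1 := by linarith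
      linarith
    rw [hm1, hm2]
    field_simp [hG1, hG2, hpin]
    ring
  · have e3 : (-(1/A))^(n+1) = ((1/A)^(n+1) : ℝ) := by
      have : Even (n+1) := by rcases h with ⟨t, ht⟩; exact ⟨t+1, by omega⟩
      exact this.neg_pow _
    have e4 : (-(1/A))^(n+2) = -((1/A)^(n+2) : ℝ) := by
      have : Odd (n+2) := by rcases h with ⟨t, ht⟩; exact ⟨t+1, by omega⟩
      exact this.neg_pow _
    have e2 : (-1:ℝ)^(n+2) = -1 := by
      have : Odd (n+2) := by rcases h with ⟨t, ht⟩; exact ⟨t+1, by omega⟩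
      exact this.neg_one_pow
    rw [e2, e3, e4, sub_neg_eq_add, div_pow, div_pow, one_pow, one_pow]
    have hm1 : (1:ℝ) - 1/A^(n+1) = (A^(n+1) - 1)/A^(n+1) := by field_simp
    have hm2 : (1:ℝ) + 1/A^(n+2) = (A^(n+2) + 1)/A^(n+2) := by field_simp
    have hG1 : A^(n+1) - 1 ≠ 0 := by
      have : (0:ℝ) < A^(n+1) - 1 := by linarith
      linarith
    have hG2 : A^(n+2) + 1 ≠ 0 := by positivity
    rw [hm1, hm2]
    field_simp [hG1, hG2, hpin]
    ring

end Rel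

section Rel2
variable {A C D : ℝ} (hA : 2 ≤ A) (hC : 2 ≤ C) (hD : 0 < D) (hDA : 2 ≤ D*A)
include hA hC hD hDA

lemma scaled_hC : 2 ≤ C*A := by nlinarith
lemma scaled_hD : 0 < D*A := by nlinarith
lemma scaled_hDA : 2 ≤ (D*A)*A := by nlinarith

lemma relR1 : C * Qser A C D - Pser A C D = (C*D*A^2)⁻¹ * Pser A (C*A) (D*A) := by
  have su := summable_useq hA hC hD hDA
  have sv := summable_vseq hA hC hD hDA
  have su' := summable_useq hA (scaled_hC hA hC hD hDA) (scaled_hD hA hC hD hDA)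
    (scaled_hDA hA hC hD hDA)
  have sw : Summable (fun n => C * vseq A C D n - useq A C D n) := (sv.mul_left C).sub su
  have hw : C * Qser A C D - Pser A C D = ∑' n, (C * vseq A C D n - useq A C D n) := by
    rw [Qser, Pser, ← tsum_mul_left, Summable.tsum_sub (sv.mul_left C) su]
  rw [hw, Summable.tsum_eq_zero_add sw]
  have w0 : C * vseq A C D 0 - useq A C D 0 = 0 := by
    rw [vseq_zero hA hC hD hDA, useq_zero hA hC hD hDA]; ring
  rw [w0, zero_add]
  have hterm : ∀ n : ℕ, C * vseq A C D (n+1) - useq A C D (n+1)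
      = (C*D*A^2)⁻¹ * useq A (C*A) (D*A) n := R1term hA hC hD hDA
  rw [tsum_congr hterm, tsum_mul_left, Pser]

lemma relR2 : D*A * Pser A C D - (C*D*A - 1) * Qser A C D
    = (C*D*A^2)⁻¹ * Qser A (C*A) (D*A) := by
  have su := summable_useq hA hC hD hDA
  have sv := summable_vseq hA hC hD hDA
  have sv' := summable_vseq hA (scaled_hC hA hC hD hDA) (scaled_hD hA hC hD hDA)
    (scaled_hDA hA hC hD hDA)
  -- h n := D*A*u n - C*D*A*v n
  have sh : Summable (fun n => D*A * useq A C D n - (C*D*A) * vseq A C D n) :=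
    (su.mul_left (D*A)).sub (sv.mul_left (C*D*A))
  have sh1 : Summable (fun n => D*A * useq A C D (n+1) - (C*D*A) * vseq A C D (n+1)) := by
    have := (summable_nat_add_iff 1).mpr sh
    simpa using this
  have sh2 : Summable (fun n => D*A * useq A C D (n+2) - (C*D*A) * vseq A C D (n+2)) := by
    have := (summable_nat_add_iff 2).mpr sh
    simpa using this
  have sv1 : Summable (fun n => vseq A C D (n+1)) := by
    have := (summable_nat_add_iff 1).mpr sv
    simpa using this
  have e1 : (∑' n, (D*A * useq A C D n - (C*D*A) * vseq A C D n))
      = D*A * Pser A C D - (C*D*A) * Qser A C D := by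
    rw [Summable.tsum_sub (su.mul_left (D*A)) (sv.mul_left (C*D*A)), tsum_mul_left, tsum_mul_left,
      Pser, Qser]
  have step1 : D*A * Pser A C D - (C*D*A - 1) * Qser A C D
      = (∑' n, (D*A * useq A C D n - (C*D*A) * vseq A C D n)) + Qser A C D := by
    rw [e1]; ring
  rw [step1]
  have step2 : (∑' n, (D*A * useq A C D n - (C*D*A) * vseq A C D n))
      = ∑' n, (D*A * useq A C D (n+1) - (C*D*A) * vseq A C D (n+1)) := by
    rw [Summable.tsum_eq_zero_add sh]
    have h0 : D*A * useq A C D 0 - (C*D*A) * vseq A C D 0 = 0 := by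
      rw [vseq_zero hA hC hD hDA, useq_zero hA hC hD hDA]; ring
    rw [h0, zero_add]
  rw [step2]
  have step3 : (∑' n, (D*A * useq A C D (n+1) - (C*D*A) * vseq A C D (n+1))) + Qser A C D
      = ∑' n, (vseq A C D n + (D*A * useq A C D (n+1) - (C*D*A) * vseq A C D (n+1))) := by
    rw [Qser, Summable.tsum_add sv sh1]
    ring
  rw [step3]
  have sz : Summable (fun n => vseq A C D n + (D*A * useq A C D (n+1) - (C*D*A) * vseq A C D (n+1))) :=
    sv.add sh1
  rw [Summable.tsum_eq_zero_add sz]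
  have z0 : vseq A C D 0 + (D*A * useq A C D (0+1) - (C*D*A) * vseq A C D (0+1)) = 0 := by
    simpa using R2term1 hA hC hD hDA
  rw [z0, zero_add]
  have hterm : ∀ n : ℕ, vseq A C D (n+1) + (D*A * useq A C D (n+1+1) - (C*D*A) * vseq A C D (n+1+1))
      = (C*D*A^2)⁻¹ * vseq A (C*A) (D*A) n := by
    intro n
    simpa using R2term2 hA hC hD hDA n
  rw [tsum_congr hterm, tsum_mul_left, Qser]

lemma Q_solved : Qser A C D
    = (C*D*A^2)⁻¹ * (D*A * Pser A (C*A) (D*A) + Qser A (C*A) (D*A)) := by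
  have h1 := relR1 hA hC hD hDA
  have h2 := relR2 hA hC hD hDA
  linear_combination (D*A) * h1 + h2

lemma P_solved : Pser A C D
    = (C*D*A^2)⁻¹ * ((C*D*A - 1) * Pser A (C*A) (D*A) + C * Qser A (C*A) (D*A)) := by
  have h1 := relR1 hA hC hD hDA
  have h2 := relR2 hA hC hD hDA
  have h3 := Q_solved hA hC hD hDA
  linear_combination C * h3 - h1

end Rel2

noncomputable def LamP (A C₀ D₀ : ℝ) (k : ℕ) : ℝ :=
  ∏ j ∈ Finset.range k, ((C₀*A^j) * (D₀*A^j) * A^2)⁻¹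

lemma LamP_succ (A C₀ D₀ : ℝ) (k : ℕ) :
    LamP A C₀ D₀ (k+1) = LamP A C₀ D₀ k * ((C₀*A^k) * (D₀*A^k) * A^2)⁻¹ :=
  Finset.prod_range_succ _ _

lemma pnum_rec (b : ℕ → ℝ) (n : ℕ) :
    pnum b (n+2) = b (n+2) * pnum b (n+1) + pnum b n := rfl

lemma qden_rec (b : ℕ → ℝ) (n : ℕ) :
    qden b (n+2) = b (n+2) * qden b (n+1) + qden b n := rfl

section Main
variable {A C₀ D₀ : ℝ} {b : ℕ → ℝ}
variable (hA : 2 ≤ A) (hC : 2 ≤ C₀) (hD0 : 0 < D₀) (hDA : 2 ≤ D₀*A)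
variable (hb0 : ∀ k : ℕ, b (3*k) = C₀*A^k - 1)
variable (hb1 : ∀ k : ℕ, b (3*k+1) = 1)
variable (hb2 : ∀ k : ℕ, b (3*k+2) = D₀*A^(k+1) - 1)

include hA hC hD0 hDA

lemma one_le_Apow (k : ℕ) : (1:ℝ) ≤ A^k := one_le_pow₀ (by linarith)

lemma lvl_hC (k : ℕ) : 2 ≤ C₀*A^k := by nlinarith [one_le_Apow hA hC hD0 hDA (k := k)]

lemma lvl_hD (k : ℕ) : 0 < D₀*A^k := by
  have : (0:ℝ) < A := by linarith
  positivity

lemma lvl_hDA (k : ℕ) : 2 ≤ (D₀*A^k)*A := by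
  have h := one_le_Apow hA hC hD0 hDA (k := k)
  nlinarith

lemma LamP_pos (k : ℕ) : 0 < LamP A C₀ D₀ k := by
  apply Finset.prod_pos
  intro j _
  have h1 := lvl_hC hA hC hD0 hDA (k := j)
  have h2 := lvl_hD hA hC hD0 hDA (k := j)
  have : (0:ℝ) < A := by linarith
  positivity

include hb0 hb1 hb2

lemma hb_ge : ∀ i, 1 ≤ b i := by
  intro i
  have h3 : i % 3 = 0 ∨ i % 3 = 1 ∨ i % 3 = 2 := by omega
  rcases h3 with h | h | h
  · have hi : i = 3*(i/3) := by omega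
    rw [hi, hb0]
    have := lvl_hC hA hC hD0 hDA (k := i/3)
    linarith
  · have hi : i = 3*(i/3)+1 := by omega
    rw [hi, hb1]
  · have hi : i = 3*(i/3)+2 := by omega
    rw [hi, hb2]
    have h1 := lvl_hDA hA hC hD0 hDA (k := i/3)
    have e : D₀*A^(i/3+1) = D₀*A^(i/3)*A := by rw [pow_succ]; ring
    linarith [e ▸ h1]

lemma star : ∀ k : ℕ,
    Pser A C₀ D₀ = LamP A C₀ D₀ (k+1) *
      (pnum b (3*k+2) * Pser A (C₀*A^(k+1)) (D₀*A^(k+1))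
        + pnum b (3*k+1) * Qser A (C₀*A^(k+1)) (D₀*A^(k+1)))
    ∧ Qser A C₀ D₀ = LamP A C₀ D₀ (k+1) *
      (qden b (3*k+2) * Pser A (C₀*A^(k+1)) (D₀*A^(k+1))
        + qden b (3*k+1) * Qser A (C₀*A^(k+1)) (D₀*A^(k+1))) := by
  intro k
  induction k with
  | zero =>
    have relP := P_solved hA hC hD0 hDA
    have relQ := Q_solved hA hC hD0 hDA
    rw [show C₀*A = C₀*A^(0+1) from by rw [pow_one], show D₀*A = D₀*A^(0+1) from by rw [pow_one]]
      at relP relQ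
    have hb0' : b 0 = C₀ - 1 := by simpa using hb0 0
    have hb1' : b 1 = 1 := by simpa using hb1 0
    have hb2' : b 2 = D₀*A - 1 := by simpa using hb2 0
    have hL : LamP A C₀ D₀ 1 = (C₀*D₀*A^2)⁻¹ := by
      simp [LamP]
    constructor
    · show Pser A C₀ D₀ = LamP A C₀ D₀ 1 * (pnum b 2 * _ + pnum b 1 * _)
      have hp2 : pnum b 2 = C₀*D₀*A - 1 := by
        show b 2 * pnum b 1 + pnum b 0 = _
        show b 2 * (b 1 * b 0 + 1) + b 0 = _
        rw [hb0', hb1', hb2']; ring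
      have hp1 : pnum b 1 = C₀ := by
        show b 1 * b 0 + 1 = _
        rw [hb0', hb1']; ring
      rw [hp2, hp1, hL]
      linear_combination relP
    · show Qser A C₀ D₀ = LamP A C₀ D₀ 1 * (qden b 2 * _ + qden b 1 * _)
      have hq2 : qden b 2 = D₀*A := by
        show b 2 * qden b 1 + qden b 0 = _
        show b 2 * b 1 + 1 = _
        rw [hb1', hb2']; ring
      have hq1 : qden b 1 = 1 := hb1 0
      rw [hq2, hq1, hL]
      linear_combination relQ
  | succ k ih =>
    obtain ⟨ihP, ihQ⟩ := ih
    have relP := P_solved hA (lvl_hC hA hC hD0 hDA (k := k+1)) (lvl_hD hA hC hD0 hDA (k := k+1))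
      (lvl_hDA hA hC hD0 hDA (k := k+1))
    have relQ := Q_solved hA (lvl_hC hA hC hD0 hDA (k := k+1)) (lvl_hD hA hC hD0 hDA (k := k+1))
      (lvl_hDA hA hC hD0 hDA (k := k+1))
    rw [show C₀*A^(k+1)*A = C₀*A^(k+2) from by rw [pow_succ]; ring,
        show D₀*A^(k+1)*A = D₀*A^(k+2) from by rw [pow_succ]; ring] at relP relQ
    have hbv3 : b (3*k+3) = C₀*A^(k+1) - 1 := hb0 (k+1)
    have hbv4 : b (3*k+4) = 1 := hb1 (k+1)
    have hbv5 : b (3*k+5) = D₀*A^(k+2) - 1 := hb2 (k+1)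
    have hL : LamP A C₀ D₀ (k+2) = LamP A C₀ D₀ (k+1) * ((C₀*A^(k+1)) * (D₀*A^(k+1)) * A^2)⁻¹ :=
      LamP_succ A C₀ D₀ (k+1)
    constructor
    · show Pser A C₀ D₀ = LamP A C₀ D₀ (k+2) *
        (pnum b (3*k+5) * Pser A (C₀*A^(k+2)) (D₀*A^(k+2))
          + pnum b (3*k+4) * Qser A (C₀*A^(k+2)) (D₀*A^(k+2)))
      have e5 : pnum b (3*k+5) = b (3*k+5) * pnum b (3*k+4) + pnum b (3*k+3) :=
        pnum_rec b (3*k+3)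
      have e4 : pnum b (3*k+4) = b (3*k+4) * pnum b (3*k+3) + pnum b (3*k+2) :=
        pnum_rec b (3*k+2)
      have e3 : pnum b (3*k+3) = b (3*k+3) * pnum b (3*k+2) + pnum b (3*k+1) :=
        pnum_rec b (3*k+1)
      rw [e5, e4, e3, hbv3, hbv4, hbv5, hL]
      linear_combination ihP + (LamP A C₀ D₀ (k+1) * pnum b (3*k+2)) * relP
        + (LamP A C₀ D₀ (k+1) * pnum b (3*k+1)) * relQ
    · show Qser A C₀ D₀ = LamP A C₀ D₀ (k+2) *
        (qden b (3*k+5) * Pser A (C₀*A^(k+2)) (D₀*A^(k+2))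
          + qden b (3*k+4) * Qser A (C₀*A^(k+2)) (D₀*A^(k+2)))
      have e5 : qden b (3*k+5) = b (3*k+5) * qden b (3*k+4) + qden b (3*k+3) :=
        qden_rec b (3*k+3)
      have e4 : qden b (3*k+4) = b (3*k+4) * qden b (3*k+3) + qden b (3*k+2) :=
        qden_rec b (3*k+2)
      have e3 : qden b (3*k+3) = b (3*k+3) * qden b (3*k+2) + qden b (3*k+1) :=
        qden_rec b (3*k+1)
      rw [e5, e4, e3, hbv3, hbv4, hbv5, hL]
      linear_combination ihQ + (LamP A C₀ D₀ (k+1) * qden b (3*k+2)) * relP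
        + (LamP A C₀ D₀ (k+1) * qden b (3*k+1)) * relQ

end Main

section Main2
variable {A C₀ D₀ : ℝ} {b : ℕ → ℝ}
variable (hA : 2 ≤ A) (hC : 2 ≤ C₀) (hD0 : 0 < D₀) (hDA : 2 ≤ D₀*A)
variable (hb0 : ∀ k : ℕ, b (3*k) = C₀*A^k - 1)
variable (hb1 : ∀ k : ℕ, b (3*k+1) = 1)
variable (hb2 : ∀ k : ℕ, b (3*k+2) = D₀*A^(k+1) - 1)

include hA hC hD0 hDA hb0 hb1 hb2

lemma approx (k : ℕ) :
    |Pser A C₀ D₀ / Qser A C₀ D₀ - cfConv b (3*k+2)| ≤ (1/2:ℝ)^(3*k+1) := by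
  obtain ⟨hP, hQ⟩ := star hA hC hD0 hDA hb0 hb1 hb2 k
  set L1 := LamP A C₀ D₀ (k+1) with hL1def
  set PS := Pser A (C₀*A^(k+1)) (D₀*A^(k+1)) with hPSdef
  set QS := Qser A (C₀*A^(k+1)) (D₀*A^(k+1)) with hQSdef
  have hPSpos : 0 < PS := Pser_pos hA (lvl_hC hA hC hD0 hDA (k := k+1))
    (lvl_hD hA hC hD0 hDA (k := k+1)) (lvl_hDA hA hC hD0 hDA (k := k+1))
  have hQSpos : 0 < QS := Qser_pos hA (lvl_hC hA hC hD0 hDA (k := k+1))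
    (lvl_hD hA hC hD0 hDA (k := k+1)) (lvl_hDA hA hC hD0 hDA (k := k+1))
  have hbge := hb_ge hA hC hD0 hDA hb0 hb1 hb2
  have hq1 : (1:ℝ) ≤ qden b (3*k+1) := qden_ge_one hbge _
  have hq2 : (1:ℝ) ≤ qden b (3*k+2) := qden_ge_one hbge _
  have hq1p : (0:ℝ) < qden b (3*k+1) := by linarith
  have hq2p : (0:ℝ) < qden b (3*k+2) := by linarith
  have hL1 : 0 < L1 := LamP_pos hA hC hD0 hDA (k := k+1)
  have hQ0 : 0 < Qser A C₀ D₀ := Qser_pos hA hC hD0 hDA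
  have hdet : pnum b (3*k+2) * qden b (3*k+1) - pnum b (3*k+1) * qden b (3*k+2)
      = (-1:ℝ)^(3*k+1) := cf_det (3*k+1)
  have hconv : cfConv b (3*k+2) = pnum b (3*k+2) / qden b (3*k+2) :=
    cfConv_eq_pq (3*k+2) b hbge
  have hnum : Pser A C₀ D₀ * qden b (3*k+2) - Qser A C₀ D₀ * pnum b (3*k+2)
      = -((-1:ℝ)^(3*k+1)) * (L1 * QS) := by
    linear_combination qden b (3*k+2) * hP - pnum b (3*k+2) * hQ - (L1*QS) * hdet
  have habs : |Pser A C₀ D₀ * qden b (3*k+2) - Qser A C₀ D₀ * pnum b (3*k+2)| = L1 * QS := by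
    rw [hnum, abs_mul, abs_neg, abs_pow, abs_neg, abs_one, one_pow, one_mul,
      abs_of_pos (by positivity)]
  have hdiff : Pser A C₀ D₀ / Qser A C₀ D₀ - cfConv b (3*k+2)
      = (Pser A C₀ D₀ * qden b (3*k+2) - Qser A C₀ D₀ * pnum b (3*k+2))
        / (Qser A C₀ D₀ * qden b (3*k+2)) := by
    rw [hconv, div_sub_div _ _ hQ0.ne' hq2p.ne']
  rw [hdiff, abs_div, habs, abs_of_pos (mul_pos hQ0 hq2p)]
  rw [div_le_iff₀ (mul_pos hQ0 hq2p)]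
  have hgrow : (2:ℝ)^(3*k+1) ≤ qden b (3*k+1) * qden b (3*k+2) := qq_growth hbge (3*k+1)
  have s1 : L1 * (qden b (3*k+1) * QS) ≤ Qser A C₀ D₀ := by
    rw [hQ]
    have h9 : 0 ≤ qden b (3*k+2) * PS := by positivity
    nlinarith
  have key : L1*QS*(2:ℝ)^(3*k+1) ≤ Qser A C₀ D₀ * qden b (3*k+2) := by
    calc L1*QS*(2:ℝ)^(3*k+1) ≤ L1*QS*(qden b (3*k+1) * qden b (3*k+2)) := by
          apply mul_le_mul_of_nonneg_left hgrow (by positivity)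
    _ = (L1 * (qden b (3*k+1) * QS)) * qden b (3*k+2) := by ring
    _ ≤ Qser A C₀ D₀ * qden b (3*k+2) := mul_le_mul_of_nonneg_right s1 (by positivity)
  have hone : (1/2:ℝ)^(3*k+1) * 2^(3*k+1) = 1 := by
    rw [← mul_pow]; norm_num
  calc L1*QS = (L1*QS) * ((1/2:ℝ)^(3*k+1) * 2^(3*k+1)) := by rw [hone, mul_one]
  _ = (1/2:ℝ)^(3*k+1) * (L1*QS*2^(3*k+1)) := by ring
  _ ≤ (1/2:ℝ)^(3*k+1) * (Qser A C₀ D₀ * qden b (3*k+2)) :=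
      mul_le_mul_of_nonneg_left key (by positivity)

omit hA hC hD0 hDA hb0 hb1 hb2 in
lemma conv_diff (hb : ∀ i, 1 ≤ b i) (n : ℕ) :
    |cfConv b (n+1) - cfConv b n| ≤ (1/2:ℝ)^n := by
  rw [cfConv_eq_pq (n+1) b hb, cfConv_eq_pq n b hb]
  have det := cf_det (b := b) n
  have hq0 : (0:ℝ) < qden b n := lt_of_lt_of_le one_pos (qden_ge_one hb n)
  have hq1 : (0:ℝ) < qden b (n+1) := lt_of_lt_of_le one_pos (qden_ge_one hb (n+1))
  have hnum : pnum b (n+1) * qden b n - qden b (n+1) * pnum b n = (-1:ℝ)^n := by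
    linear_combination det
  rw [div_sub_div _ _ hq1.ne' hq0.ne', hnum, abs_div, abs_pow, abs_neg, abs_one, one_pow,
    abs_of_pos (mul_pos hq1 hq0)]
  rw [div_le_iff₀ (mul_pos hq1 hq0)]
  have hgrow : (2:ℝ)^n ≤ qden b n * qden b (n+1) := qq_growth hb n
  have hone : (1/2:ℝ)^n * 2^n = 1 := by rw [← mul_pow]; norm_num
  calc (1:ℝ) = (1/2:ℝ)^n * 2^n := hone.symm
  _ ≤ (1/2:ℝ)^n * (qden b n * qden b (n+1)) :=
      mul_le_mul_of_nonneg_left hgrow (by positivity)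
  _ = (1/2:ℝ)^n * (qden b (n+1) * qden b n) := by ring

omit hA hC hD0 hDA hb0 hb1 hb2 in
lemma conv_tele (hb : ∀ i, 1 ≤ b i) (m : ℕ) :
    ∀ j, |cfConv b (m+j) - cfConv b m| ≤ 2*(1/2:ℝ)^m - 2*(1/2:ℝ)^(m+j) := by
  intro j
  induction j with
  | zero => simp
  | succ j ih =>
    have h1 := conv_diff hb (m+j)
    have htri : |cfConv b (m+(j+1)) - cfConv b m|
        ≤ |cfConv b (m+j+1) - cfConv b (m+j)| + |cfConv b (m+j) - cfConv b m| := by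
      rw [show m+(j+1) = m+j+1 from rfl]
      exact abs_sub_le _ _ _
    have hpow : (1/2:ℝ)^(m+(j+1)) = (1/2:ℝ)^(m+j) * (1/2) := by
      rw [show m+(j+1) = (m+j)+1 from rfl, pow_succ]
    linarith

lemma main_aux :
    Filter.Tendsto (cfConv b) Filter.atTop (nhds (Pser A C₀ D₀ / Qser A C₀ D₀)) := by
  have hbge := hb_ge hA hC hD0 hDA hb0 hb1 hb2
  rw [← tendsto_sub_nhds_zero_iff]
  have hgt : Filter.Tendsto (fun n : ℕ => 16*(1/2:ℝ)^n) Filter.atTop (nhds 0) := by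
    have := (tendsto_pow_atTop_nhds_zero_of_lt_one
      (by norm_num : (0:ℝ) ≤ 1/2) (by norm_num : (1/2:ℝ) < 1)).const_mul (16:ℝ)
    simpa using this
  apply squeeze_zero_norm' ?_ hgt
  · filter_upwards [Filter.eventually_ge_atTop 2] with n hn
    set k := (n-2)/3 with hk
    have hm1 : 3*k+2 ≤ n := by omega
    have hm2 : n ≤ 3*k+4 := by omega
    obtain ⟨j, hj⟩ : ∃ j, n = (3*k+2) + j := ⟨n - (3*k+2), by omega⟩
    have htele := conv_tele hbge (3*k+2) j
    have happ := approx hA hC hD0 hDA hb0 hb1 hb2 k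
    have htri : |cfConv b n - Pser A C₀ D₀ / Qser A C₀ D₀|
        ≤ |cfConv b n - cfConv b (3*k+2)| + |Pser A C₀ D₀ / Qser A C₀ D₀ - cfConv b (3*k+2)| := by
      have := abs_sub_le (cfConv b n) (cfConv b (3*k+2)) (Pser A C₀ D₀ / Qser A C₀ D₀)
      rw [abs_sub_comm (cfConv b (3*k+2)) (Pser A C₀ D₀ / Qser A C₀ D₀)] at this
      exact this
    rw [hj] at htri ⊢
    have hb1' : |cfConv b (3*k+2+j) - cfConv b (3*k+2)| ≤ 2*(1/2:ℝ)^(3*k+2) := by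
      have hp : (0:ℝ) < (1/2:ℝ)^(3*k+2+j) := by positivity
      linarith
    have hcomb : |cfConv b (3*k+2+j) - Pser A C₀ D₀ / Qser A C₀ D₀|
        ≤ 2*(1/2:ℝ)^(3*k+2) + (1/2:ℝ)^(3*k+1) := by linarith
    have he1 : 2*(1/2:ℝ)^(3*k+2) + (1/2:ℝ)^(3*k+1) = (1/2:ℝ)^(3*k) := by
      rw [pow_succ, pow_succ]; ring
    have he2 : (1/2:ℝ)^(3*k) ≤ 16*(1/2:ℝ)^(3*k+2+j) := by
      rw [show 3*k+2+j = 3*k+(2+j) from by omega, pow_add]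
      have h4 : (1/2:ℝ)^4 ≤ (1/2:ℝ)^(2+j) :=
        pow_le_pow_of_le_one (by norm_num) (by norm_num) (by omega)
      have hX : (0:ℝ) < (1/2:ℝ)^(3*k) := by positivity
      nlinarith [mul_le_mul_of_nonneg_left h4 hX.le]
    rw [Real.norm_eq_abs]
    calc |cfConv b (3*k+2+j) - Pser A C₀ D₀ / Qser A C₀ D₀| ≤ (1/2:ℝ)^(3*k) := by
          rw [← he1]; exact hcomb
    _ ≤ 16*(1/2:ℝ)^(3*k+2+j) := he2

end Main2

/-- Theorem 1.1 (eq. (1.10)): for integer `a ≥ 2`, integer `c > 1` and positive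
rational `d` with `d·a ∈ ℤ⁺` and `d·a > 1`, the continued fraction
`[c − 1; 1, d·a − 1, c·a − 1, 1, d·a² − 1, c·a² − 1, …]` equals the given
ratio of series. -/
theorem statement4 (a : ℕ) (ha : 2 ≤ a) (c : ℤ) (hc : 1 < c) (d : ℚ) (hd : 0 < d)
    (hda : ∃ k : ℕ, 0 < k ∧ d * (a : ℚ) = (k : ℚ)) (hda1 : 1 < d * (a : ℚ)) :
    CFracEq
      (fun i => if i = 0 then (c : ℝ) - 1
        else if i % 3 = 1 then 1
        else if i % 3 = 2 then (d : ℝ) * (a : ℝ) ^ ((i + 1) / 3) - 1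
        else (c : ℝ) * (a : ℝ) ^ (i / 3) - 1)
      ((∑' n : ℕ, (-1 : ℝ) ^ n / ((c : ℝ) ^ ((n : ℤ) - 1) * (d : ℝ) ^ n * (a : ℝ) ^ (n ^ 2) *
          qPoch (-(1 / (a : ℝ))) (-(1 / (a : ℝ))) n)) /
        (∑' n : ℕ, 1 / (((c : ℝ) * (d : ℝ)) ^ n * (a : ℝ) ^ (n ^ 2 + n) *
          qPoch (-(1 / (a : ℝ))) (-(1 / (a : ℝ))) n))) := by
  have hA : (2:ℝ) ≤ (a:ℝ) := by exact_mod_cast ha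
  have hC : (2:ℝ) ≤ (c:ℝ) := by exact_mod_cast (by omega : (2:ℤ) ≤ c)
  have hD0 : (0:ℝ) < (d:ℝ) := by exact_mod_cast hd
  have hDA : (2:ℝ) ≤ (d:ℝ)*(a:ℝ) := by
    obtain ⟨k, hk0, hk⟩ := hda
    rw [hk] at hda1
    have hk2 : (2:ℕ) ≤ k := by exact_mod_cast hda1
    have h2 : (2:ℚ) ≤ d*(a:ℚ) := by rw [hk]; exact_mod_cast hk2
    have h3 := (Rat.cast_le (K := ℝ)).mpr h2
    push_cast at h3
    exact h3
  have ha0 : (0:ℝ) < (a:ℝ) := by linarith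
  have hc0 : ((c:ℝ)) ≠ 0 := by linarith
  have hd0 : ((d:ℝ)) ≠ 0 := ne_of_gt hD0
  have hnum_eq : (∑' n : ℕ, (-1 : ℝ) ^ n / ((c : ℝ) ^ ((n : ℤ) - 1) * (d : ℝ) ^ n *
        (a : ℝ) ^ (n ^ 2) * qPoch (-(1 / (a : ℝ))) (-(1 / (a : ℝ))) n))
      = Pser (a:ℝ) (c:ℝ) (d:ℝ) := by
    rw [Pser]
    apply tsum_congr
    intro n
    have hπ : qPoch (-(1 / (a:ℝ))) (-(1 / (a:ℝ))) n ≠ 0 := ne_of_gt (pi_pos hA n)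
    have hz : (c:ℝ)^((n:ℤ)-1) = (c:ℝ)^(n:ℕ) * (c:ℝ)⁻¹ := by
      rw [zpow_sub_one₀ hc0, zpow_natCast]
    unfold useq piA
    rw [hz, mul_pow]
    have hcp : ((c:ℝ))^n ≠ 0 := pow_ne_zero n hc0
    have hdp : ((d:ℝ))^n ≠ 0 := pow_ne_zero n hd0
    have hap : ((a:ℝ))^(n^2) ≠ 0 := by positivity
    field_simp
  have hden_eq : (∑' n : ℕ, 1 / (((c : ℝ) * (d : ℝ)) ^ n * (a : ℝ) ^ (n ^ 2 + n) *
        qPoch (-(1 / (a : ℝ))) (-(1 / (a : ℝ))) n))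
      = Qser (a:ℝ) (c:ℝ) (d:ℝ) := by
    rw [Qser]
    apply tsum_congr
    intro n
    rfl
  rw [CFracEq, hnum_eq, hden_eq]
  apply main_aux hA hC hD0 hDA
  · -- hb0
    intro k
    by_cases hk : k = 0
    · subst hk; norm_num
    · have h1 : ¬(3*k = 0) := by omega
      have h2 : ¬((3*k) % 3 = 1) := by omega
      have h3 : ¬((3*k) % 3 = 2) := by omega
      simp only [if_neg h1, if_neg h2, if_neg h3]
      rw [show 3*k/3 = k from by omega]
  · -- hb1
    intro k
    have h1 : ¬(3*k+1 = 0) := by omega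
    have h2 : (3*k+1) % 3 = 1 := by omega
    simp only [if_neg h1, if_pos h2]
  · -- hb2
    intro k
    have h1 : ¬(3*k+2 = 0) := by omega
    have h2 : ¬((3*k+2) % 3 = 1) := by omega
    have h3 : (3*k+2) % 3 = 2 := by omega
    simp only [if_neg h1, if_neg h2, if_pos h3]
    rw [show (3*k+2+1)/3 = k+1 from by omega]
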